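/- Let n ≥ 3 be an integer and r = 2(n−1)/n. There exists a constant C > 0 depending only on n such that for every μ ∈ (0, 1], ‖U₁^{r−1}‖_{L^r(∂′B_{1/μ}⁺)} = (∫_{{y′ ∈ ℝ^{n−1} : |y′| < 1/μ}} U₁(y′, 0)^{(r−1) r} dy′)^{1/r} ≤ C (1 + μ^{(n²−8n+8)/(2n)}). -/

import Mathlib

open MeasureTheory Real

/-- The sharp constant `S = (π n(n−2))⁻¹ (Γ(n)/Γ(n/2))^{2/n}` in the Sobolev
inequality on `ℝⁿ`. -/
noncomputable def sobolevS (n : ℕ) : ℝ :=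
  (π * n * ((n : ℝ) - 2))⁻¹ * (Real.Gamma n / Real.Gamma ((n : ℝ) / 2)) ^ ((2 : ℝ) / n)

/-- The constant `c(n) = 1/(2^{2/n}(n−2) n S)`. -/
noncomputable def bubbleC (n : ℕ) : ℝ :=
  1 / (2 ^ ((2 : ℝ) / n) * ((n : ℝ) - 2) * n * sobolevS n)

/-- The bubble `U_{x₀,λ}(x) = (λ/(λ² + c(n)|x−x₀|²))^{(n−2)/2}`. -/
noncomputable def bubble (n : ℕ) (x₀ : EuclideanSpace ℝ (Fin n)) (lam : ℝ)
    (x : EuclideanSpace ℝ (Fin n)) : ℝ :=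
  (lam / (lam ^ 2 + bubbleC n * ‖x - x₀‖ ^ 2)) ^ (((n : ℝ) - 2) / 2)

/-!
The integrand is `(1 + c|y'|²)^(-q)` with `q = (n-2)²(n-1)/n²`, which is comparable to
`(1 + |y'|)^(-2q)`. In polar coordinates on `ℝ^(n-1)` its integral over the disc of radius `R`
is therefore at most a constant times `1 + (1 + R)^a`, where `a = n - 1 - 2q` is nonzero because
`n² - 8n + 8` has no integer root (for `a = 0` a logarithm would appear). Taking the power
`s = n/(2(n-1)) ≤ 1` is subadditive, `a s = -p` with `p = (n² - 8n + 8)/(2n)`, and for `R = 1/μ`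
one has `(1 + 1/μ)^(-p) ≤ 2^|p| μ^p`.
-/

lemma sobolevS_pos {n : ℕ} (hn : 2 < n) : 0 < sobolevS n := by
  have hn2 : (2 : ℝ) < n := by exact_mod_cast hn
  unfold sobolevS
  have hΓ : 0 < Real.Gamma n / Real.Gamma ((n : ℝ) / 2) :=
    div_pos (Real.Gamma_pos_of_pos (by linarith)) (Real.Gamma_pos_of_pos (by linarith))
  have : 0 < π * n * ((n : ℝ) - 2) := mul_pos (mul_pos pi_pos (by linarith)) (by linarith)
  positivity

lemma bubbleC_pos {n : ℕ} (hn : 2 < n) : 0 < bubbleC n := by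
  have hn2 : (0 : ℝ) < n - 2 := sub_pos.2 (by exact_mod_cast hn)
  have := sobolevS_pos hn
  unfold bubbleC
  positivity

lemma natCast_sq_sub_eight_mul_add_eight_ne_zero (n : ℕ) : (n : ℝ) ^ 2 - 8 * n + 8 ≠ 0 := by
  intro h
  have hZ : (n : ℤ) ^ 2 - 8 * n + 8 = 0 := by exact_mod_cast h
  rcases lt_or_ge n 7 with hn | hn
  · interval_cases n <;> norm_num at hZ
  · nlinarith

noncomputable def decayExponent (n : ℝ) : ℝ := (n - 2) ^ 2 * (n - 1) / n ^ 2

lemma decayExponent_nonneg {n : ℝ} (hn : 1 ≤ n) : 0 ≤ decayExponent n := by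
  have : 0 ≤ n - 1 := by linarith
  unfold decayExponent; positivity

lemma rpow_rpow_eq_rpow_neg_decayExponent {x n : ℝ} (hx : 0 ≤ x) (hn : n ≠ 0) :
    (x ^ (-(n - 2) / 2)) ^ ((2 * (n - 1) / n - 1) * (2 * (n - 1) / n)) =
      x ^ (-decayExponent n) := by
  rw [← Real.rpow_mul hx, decayExponent]; congr 1; field_simp; ring

lemma natCast_sub_one_ne_two_mul_decayExponent {n : ℕ} (hn : 1 < n) :
    (n : ℝ) - 1 ≠ 2 * decayExponent n := by
  have hn1 : (n : ℝ) - 1 ≠ 0 := sub_ne_zero.2 (by exact_mod_cast hn.ne')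
  have hn0 : (n : ℝ) ≠ 0 := by positivity
  intro h
  rw [decayExponent] at h
  field_simp at h
  exact natCast_sq_sub_eight_mul_add_eight_ne_zero n (by linear_combination -h)

lemma sub_two_mul_decayExponent_mul {n : ℝ} (hn0 : n ≠ 0) (hn1 : n - 1 ≠ 0) :
    (n - 1 - 2 * decayExponent n) * (n / (2 * (n - 1))) = -((n ^ 2 - 8 * n + 8) / (2 * n)) := by
  rw [decayExponent]; field_simp; ring

lemma mul_one_add_rpow_rpow_le {K x a s : ℝ} (hK : 0 ≤ K) (hx : 0 ≤ x) (hs0 : 0 ≤ s)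
    (hs1 : s ≤ 1) : (K * (1 + x ^ a)) ^ s ≤ K ^ s * (1 + x ^ (a * s)) := by
  rw [Real.mul_rpow hK (by positivity), Real.rpow_mul hx]
  gcongr
  simpa using Real.rpow_add_le_add_rpow zero_le_one (by positivity) hs0 hs1

lemma one_add_one_add_inv_rpow_neg_le {μ : ℝ} (hμ : 0 < μ) (hμ1 : μ ≤ 1) (p : ℝ) :
    1 + (1 + μ⁻¹) ^ (-p) ≤ 2 ^ |p| * (1 + μ ^ p) := by
  have h : 1 + μ⁻¹ = (1 + μ) / μ := by field_simp; ring
  have h2 : (1 + μ) ^ (-p) ≤ 2 ^ |p| :=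
    (Real.rpow_le_rpow_of_exponent_le (by linarith) (neg_le_abs p)).trans
      (Real.rpow_le_rpow (by linarith) (by linarith) (abs_nonneg p))
  have h1 : 1 ≤ (2 : ℝ) ^ |p| := Real.one_le_rpow one_le_two (abs_nonneg p)
  rw [h, Real.div_rpow (by linarith) hμ.le, Real.rpow_neg hμ.le p, div_inv_eq_mul]
  nlinarith [Real.rpow_nonneg hμ.le p]

lemma one_add_mul_sq_rpow_neg_le {c q t : ℝ} (hc : 0 < c) (hq : 0 ≤ q) (ht : 0 ≤ t) :
    (1 + c * t ^ 2) ^ (-q) ≤ (min 1 c / 2) ^ (-q) * (1 + t) ^ (-(2 * q)) := by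
  have hm : 0 < min 1 c := lt_min one_pos hc
  have hle : min 1 c / 2 * (1 + t) ^ 2 ≤ 1 + c * t ^ 2 := by
    nlinarith [min_le_left 1 c, min_le_right 1 c, sq_nonneg (1 - t), sq_nonneg t]
  calc (1 + c * t ^ 2) ^ (-q) ≤ (min 1 c / 2 * (1 + t) ^ 2) ^ (-q) :=
        Real.rpow_le_rpow_of_nonpos (by positivity) hle (neg_nonpos.2 hq)
    _ = (min 1 c / 2) ^ (-q) * (1 + t) ^ (-(2 * q)) := by
        rw [Real.mul_rpow (by positivity) (by positivity), ← Real.rpow_natCast,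
          ← Real.rpow_mul (by positivity)]
        norm_num

lemma integral_one_add_rpow_le {b R : ℝ} (hb : b ≠ -1) (hR : 0 ≤ R) :
    ∫ t in (0 : ℝ)..R, (1 + t) ^ b ≤ (1 + (1 + R) ^ (b + 1)) / |b + 1| := by
  have hR' : 0 ≤ (1 + R) ^ (b + 1) := by positivity
  have hint : ∫ t in (0 : ℝ)..R, (1 + t) ^ b = ((1 + R) ^ (b + 1) - 1) / (b + 1) := by
    rw [intervalIntegral.integral_comp_add_left (fun x => x ^ b), add_zero,
      integral_rpow (Or.inr ⟨hb, fun h => by norm_num [Set.mem_uIcc] at h; linarith⟩), one_rpow]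
  calc ∫ t in (0 : ℝ)..R, (1 + t) ^ b ≤ |(1 + R) ^ (b + 1) - 1| / |b + 1| := by
        rw [hint, ← abs_div]; exact le_abs_self _
    _ ≤ (1 + (1 + R) ^ (b + 1)) / |b + 1| := by
        gcongr; exact abs_le.2 ⟨by linarith, by linarith⟩

lemma integral_pow_mul_one_add_mul_sq_rpow_neg_le {c q R : ℝ} (hc : 0 < c) (hq : 0 ≤ q)
    (hR : 0 ≤ R) (k : ℕ) :
    ∫ t in (0 : ℝ)..R, t ^ k * (1 + c * t ^ 2) ^ (-q) ≤
      (min 1 c / 2) ^ (-q) * ∫ t in (0 : ℝ)..R, (1 + t) ^ ((k : ℝ) - 2 * q) := by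
  rw [← intervalIntegral.integral_const_mul]
  have hpos : ∀ t ∈ Set.uIcc 0 R, 1 + t ≠ 0 := fun t ht => by
    rw [Set.uIcc_of_le hR] at ht; linarith [ht.1]
  refine intervalIntegral.integral_mono_on hR ?_ ?_ fun t ht => ?_
  · refine Continuous.intervalIntegrable ?_ _ _
    exact (continuous_pow k).mul
      ((by fun_prop : Continuous fun t : ℝ => 1 + c * t ^ 2).rpow_const fun t => by
        left; positivity)
  · exact (ContinuousOn.rpow_const (by fun_prop) fun t ht => Or.inl (hpos t ht)).const_mul _
      |>.intervalIntegrable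
  · calc t ^ k * (1 + c * t ^ 2) ^ (-q)
        ≤ (1 + t) ^ k * ((min 1 c / 2) ^ (-q) * (1 + t) ^ (-(2 * q))) := by
          have ht0 := ht.1
          exact mul_le_mul (pow_le_pow_left₀ ht0 (by linarith) k)
            (one_add_mul_sq_rpow_neg_le hc hq ht0) (by positivity) (by positivity)
      _ = (min 1 c / 2) ^ (-q) * (1 + t) ^ ((k : ℝ) - 2 * q) := by
          rw [sub_eq_add_neg, Real.rpow_add (by linarith [ht.1]), Real.rpow_natCast]
          ring

section Polar

open Metric Set

variable {E F : Type*} [NormedAddCommGroup E] [NormedSpace ℝ E] [FiniteDimensional ℝ E]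
  [MeasurableSpace E] [BorelSpace E] [Nontrivial E] [NormedAddCommGroup F] [NormedSpace ℝ F]
  (μ : Measure E) [μ.IsAddHaarMeasure]

lemma setIntegral_ball_fun_norm_addHaar (f : ℝ → F) (r : ℝ) :
    ∫ x in ball (0 : E) r, f ‖x‖ ∂μ = Module.finrank ℝ E • μ.real (ball 0 1) •
      ∫ y in Ioo 0 r, y ^ (Module.finrank ℝ E - 1) • f y := by
  have hball : ∫ x in ball (0 : E) r, f ‖x‖ ∂μ = ∫ x, (Iio r).indicator f ‖x‖ ∂μ := by
    rw [← integral_indicator measurableSet_ball]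
    congr 1 with x
    by_cases hx : ‖x‖ < r <;> simp [indicator, hx]
  rw [hball, integral_fun_norm_addHaar, ← Ioi_inter_Iio, ← setIntegral_indicator measurableSet_Iio]
  congr 3 with y
  by_cases hy : y < r <;> simp [indicator, hy]

lemma exists_setIntegral_ball_one_add_mul_sq_rpow_neg_le {c q : ℝ} (hc : 0 < c) (hq : 0 ≤ q)
    (hdq : (Module.finrank ℝ E : ℝ) ≠ 2 * q) :
    ∃ K > 0, ∀ R ≥ 0, ∫ x in ball (0 : E) R, (1 + c * ‖x‖ ^ 2) ^ (-q) ∂μ ≤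
      K * (1 + (1 + R) ^ ((Module.finrank ℝ E : ℝ) - 2 * q)) := by
  set d := Module.finrank ℝ E
  have hd : 1 ≤ d := Module.finrank_pos
  have hV : 0 < μ.real (ball 0 1) :=
    ENNReal.toReal_pos (measure_ball_pos μ _ one_pos).ne' measure_ball_lt_top.ne
  have hdq' : (d : ℝ) - 2 * q ≠ 0 := sub_ne_zero.2 hdq
  have hm : 0 < min 1 c := lt_min one_pos hc
  refine ⟨d * μ.real (ball 0 1) * (min 1 c / 2) ^ (-q) / |(d : ℝ) - 2 * q|, by positivity,
    fun R hR => ?_⟩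
  have hexp : ((d - 1 : ℕ) : ℝ) - 2 * q + 1 = d - 2 * q := by
    rw [Nat.cast_sub hd]; ring
  rw [setIntegral_ball_fun_norm_addHaar μ (fun t => (1 + c * t ^ 2) ^ (-q)),
    ← integral_Ioc_eq_integral_Ioo, ← intervalIntegral.integral_of_le hR, nsmul_eq_mul,
    smul_eq_mul]
  simp only [smul_eq_mul]
  calc (d : ℝ) * (μ.real (ball 0 1) * ∫ t in (0 : ℝ)..R, t ^ (d - 1) * (1 + c * t ^ 2) ^ (-q))
      ≤ d * (μ.real (ball 0 1) * ((min 1 c / 2) ^ (-q) *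
          ((1 + (1 + R) ^ ((d : ℝ) - 2 * q)) / |(d : ℝ) - 2 * q|))) := by
        gcongr
        refine (integral_pow_mul_one_add_mul_sq_rpow_neg_le hc hq hR _).trans ?_
        gcongr
        rw [← hexp]
        exact integral_one_add_rpow_le (fun h => hdq' (by rw [← hexp, h]; ring)) hR
    _ = _ := by ring

end Polar

/-- with `r = 2(n−1)/n`, the `L^r`-norm over the boundary disc
`∂′B_{1/μ}⁺ = {y′ ∈ ℝ^{n−1} : |y′| < 1/μ}` of `U₁(·,0)^{r−1}`, where
`U₁(y′,0) = (1 + c(n)|y′|²)^{−(n−2)/2}`, is bounded by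
`C(1 + μ^{(n²−8n+8)/(2n)})` for `μ ∈ (0,1]`. -/
theorem boundary_norm_bound (n : ℕ) (hn : 3 ≤ n) :
    ∃ C > (0 : ℝ), ∀ μ : ℝ, 0 < μ → μ ≤ 1 →
      (∫ y in Metric.ball (0 : EuclideanSpace ℝ (Fin (n - 1))) (1 / μ),
          ((1 + bubbleC n * ‖y‖ ^ 2) ^ (-((n : ℝ) - 2) / 2)) ^
            ((2 * ((n : ℝ) - 1) / n - 1) * (2 * ((n : ℝ) - 1) / n))) ^
        ((n : ℝ) / (2 * ((n : ℝ) - 1))) ≤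
      C * (1 + μ ^ (((n : ℝ) ^ 2 - 8 * n + 8) / (2 * n))) := by
  have hn3 : (3 : ℝ) ≤ n := by exact_mod_cast hn
  have hc : 0 < bubbleC n := bubbleC_pos hn
  set s : ℝ := (n : ℝ) / (2 * ((n : ℝ) - 1))
  set p : ℝ := ((n : ℝ) ^ 2 - 8 * n + 8) / (2 * n)
  have hs : 0 ≤ s ∧ s ≤ 1 :=
    ⟨div_nonneg (by linarith) (by linarith), by rw [div_le_one (by linarith)]; linarith⟩
  have : Nontrivial (EuclideanSpace ℝ (Fin (n - 1))) :=
    have : Nonempty (Fin (n - 1)) := ⟨⟨0, by omega⟩⟩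
    inferInstance
  have hdim : (Module.finrank ℝ (EuclideanSpace ℝ (Fin (n - 1))) : ℝ) = n - 1 := by
    rw [finrank_euclideanSpace_fin, Nat.cast_sub (by omega), Nat.cast_one]
  obtain ⟨K, hK, hball⟩ := exists_setIntegral_ball_one_add_mul_sq_rpow_neg_le
    (E := EuclideanSpace ℝ (Fin (n - 1))) volume hc (decayExponent_nonneg (n := n) (by linarith))
    (by rw [hdim]; exact natCast_sub_one_ne_two_mul_decayExponent (by omega))
  refine ⟨K ^ s * 2 ^ |p|, by positivity, fun μ hμ hμ1 => ?_⟩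
  have hintegrand (y : EuclideanSpace ℝ (Fin (n - 1))) :=
    rpow_rpow_eq_rpow_neg_decayExponent (x := 1 + bubbleC n * ‖y‖ ^ 2) (by positivity)
      (n := n) (by positivity)
  simp only [hintegrand]
  calc _ ≤ (K * (1 + (1 + 1 / μ) ^ ((n : ℝ) - 1 - 2 * decayExponent n))) ^ s :=
        Real.rpow_le_rpow (setIntegral_nonneg measurableSet_ball fun y _ => by positivity)
          (hdim ▸ hball (1 / μ) (by positivity)) hs.1
    _ ≤ K ^ s * (1 + (1 + μ⁻¹) ^ (-p)) := by
        rw [← sub_two_mul_decayExponent_mul (by positivity) (by linarith), one_div]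
        exact mul_one_add_rpow_rpow_le hK.le (by positivity) hs.1 hs.2
    _ ≤ K ^ s * 2 ^ |p| * (1 + μ ^ p) := by
        rw [mul_assoc]
        gcongr
        exact one_add_one_add_inv_rpow_neg_le hμ hμ1 p
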